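/- For K-linear maps f : A → B and g : B → C with f(1)=1 and g(1)=1 between commutative unital K-algebras, the cumulants of the composite satisfy, for every n ≥ 1 and all a_1,…,a_n ∈ A: κ(g∘f)_n(a_1,…,a_n) = Σ κ(g)_k(κ(f)_{|I_1|}((a_i)_{i∈I_1}),…,κ(f)_{|I_k|}((a_i)_{i∈I_k})), the sum running over all partitions {I_1,…,I_k} of {1,…,n} into nonempty blocks. (This is the Taylor-coefficient form of the identity κ(g∘f) = κ(g)∘κ(f).) -/

import Mathlib

/-!
Write `κ_f(t) = ∑_{π ⊢ t} μ(|π|) ∏_{B ∈ π} f(∏_{i ∈ B} a_i)` with `μ(k) = (-1)^(k-1) (k-1)!`.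
Expanding the outer `κ_g` on the right, a partition of the set of blocks of `π` is the same as a
coarsening `σ ≥ π`. After exchanging the sums over the pairs `π ≤ σ`, the sum over the
refinements `π` of `σ` factors over the blocks `U` of `σ`, and since `g` is additive each factor is
`g (∑_{π ⊢ U} ∏_{B ∈ π} κ_f(B)) = g (f (∏_{i ∈ U} a_i))` by the moment–cumulant formula; what is
left is the defining sum of `κ_{g ∘ f}`. The moment–cumulant formula is proved by the same exchange
of sums: the coefficient of `∏_{B ∈ π} f(…)` becomes `∑_{ρ ⊢ π} ∏_{C ∈ ρ} μ(|C|)`, which vanishes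
unless `π` has a single block (induction on the block containing a fixed point, using
`μ(k + 1) = -k μ(k)`).
-/

open Finset

/-- The set of partitions of `{0,…,n-1}` into nonempty, pairwise disjoint blocks. -/
def partitionsOf (n : ℕ) : Finset (Finset (Finset (Fin n))) :=
  ((Finset.univ : Finset (Fin n)).powerset.powerset).filter fun P =>
    (∀ s ∈ P, s.Nonempty) ∧ (∀ s ∈ P, ∀ t ∈ P, s ≠ t → s ∩ t = ∅) ∧ P.sup id = Finset.univ

/-- The `n`-th cumulant of a map `f` between commutative rings. -/
noncomputable def cumul {R S : Type*} [CommRing R] [CommRing S]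
    (f : R → S) (n : ℕ) (a : Fin n → R) : S :=
  ∑ P ∈ partitionsOf n,
    ((-1 : ℤ) ^ (P.card - 1) * ((P.card - 1).factorial : ℤ)) • ∏ s ∈ P, f (∏ i ∈ s, a i)

/-- Restriction of a family `a` to a finite subset `s` of its index set. -/
noncomputable def restr {α β : Type*} (a : α → β) (s : Finset α) : Fin s.card → β :=
  fun i => a (s.equivFin.symm i).1

section

variable {α : Type*} [DecidableEq α]

def setPartitions (t : Finset α) : Finset (Finset (Finset α)) :=
  (t.powerset.powerset).filter fun P =>
    (∀ s ∈ P, s.Nonempty) ∧ (∀ s ∈ P, ∀ u ∈ P, s ≠ u → s ∩ u = ∅) ∧ P.sup id = t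

structure IsSetPartition (t : Finset α) (P : Finset (Finset α)) : Prop where
  nonempty_of_mem ⦃s : Finset α⦄ : s ∈ P → s.Nonempty
  eq_of_mem_of_mem ⦃s u : Finset α⦄ ⦃x : α⦄ : s ∈ P → u ∈ P → x ∈ s → x ∈ u → s = u
  sup_eq : P.sup id = t

namespace IsSetPartition

variable {t : Finset α} {P : Finset (Finset α)}

theorem subset_of_mem (hP : IsSetPartition t P) {s : Finset α} (hs : s ∈ P) : s ⊆ t :=
  hP.sup_eq ▸ le_sup (f := id) hs

theorem exists_mem (hP : IsSetPartition t P) {x : α} (hx : x ∈ t) : ∃ s ∈ P, x ∈ s := by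
  rw [← hP.sup_eq] at hx
  simpa using mem_sup.1 hx

theorem pairwiseDisjoint (hP : IsSetPartition t P) : (P : Set (Finset α)).PairwiseDisjoint id :=
  fun _ hs _ hu hne => disjoint_left.2 fun _ hxs hxu => hne (hP.eq_of_mem_of_mem hs hu hxs hxu)

theorem of_subset (hP : IsSetPartition t P) {Q : Finset (Finset α)} (hQ : Q ⊆ P) :
    IsSetPartition (Q.sup id) Q :=
  ⟨fun _ hs => hP.nonempty_of_mem (hQ hs), fun _ _ _ hs hu => hP.eq_of_mem_of_mem (hQ hs) (hQ hu),
    rfl⟩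

protected theorem insert (hP : IsSetPartition t P) {s : Finset α} (hs : s.Nonempty)
    (hst : Disjoint s t) : IsSetPartition (s ∪ t) (insert s P) where
  nonempty_of_mem u hu := by
    rcases mem_insert.1 hu with rfl | hu
    exacts [hs, hP.nonempty_of_mem hu]
  eq_of_mem_of_mem u v x hu hv hxu hxv := by
    rcases mem_insert.1 hu with rfl | hu' <;> rcases mem_insert.1 hv with rfl | hv'
    · rfl
    · exact absurd (hP.subset_of_mem hv' hxv) (disjoint_left.1 hst hxu)
    · exact absurd (hP.subset_of_mem hu' hxu) (disjoint_left.1 hst hxv)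
    · exact hP.eq_of_mem_of_mem hu' hv' hxu hxv
  sup_eq := by rw [sup_insert, hP.sup_eq]; rfl

theorem card_le_one_iff (hP : IsSetPartition t P) (ht : t.Nonempty) : #P ≤ 1 ↔ P = {t} := by
  refine ⟨fun h => ?_, by rintro rfl; simp⟩
  obtain ⟨s, hs, -⟩ := hP.exists_mem ht.choose_spec
  obtain ⟨u, rfl⟩ := card_eq_one.1 (le_antisymm h (card_pos.2 ⟨s, hs⟩))
  simpa using hP.sup_eq

theorem insert_sdiff_sup_filter (hP : IsSetPartition t P) {x : α} (hx : x ∈ t) :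
    insert (t \ (P.filter (x ∉ ·)).sup id) (P.filter (x ∉ ·)) = P := by
  obtain ⟨b, hb, hxb⟩ := hP.exists_mem hx
  have hblock : t \ (P.filter (x ∉ ·)).sup id = b := by
    ext y
    simp only [mem_sdiff, mem_sup, mem_filter, id]
    constructor
    · rintro ⟨hy, hy'⟩
      obtain ⟨s, hs, hys⟩ := hP.exists_mem hy
      by_cases hxs : x ∈ s
      · rwa [← hP.eq_of_mem_of_mem hs hb hxs hxb]
      · exact absurd ⟨s, ⟨hs, hxs⟩, hys⟩ hy'
    · refine fun hyb => ⟨hP.subset_of_mem hb hyb, ?_⟩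
      rintro ⟨s, ⟨hs, hxs⟩, hys⟩
      exact hxs (hP.eq_of_mem_of_mem hb hs hyb hys ▸ hxb)
  ext s
  rw [hblock, mem_insert, mem_filter]
  refine ⟨by rintro (rfl | ⟨hs, -⟩) <;> assumption, fun hs => ?_⟩
  by_cases hxs : x ∈ s
  exacts [Or.inl (hP.eq_of_mem_of_mem hs hb hxs hxb), Or.inr ⟨hs, hxs⟩]

end IsSetPartition

theorem isSetPartition_singleton {t : Finset α} (ht : t.Nonempty) : IsSetPartition t {t} :=
  ⟨by simpa using ht, fun _ _ _ hs hu _ _ => (mem_singleton.1 hs).trans (mem_singleton.1 hu).symm,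
    by simp⟩

theorem mem_setPartitions {t : Finset α} {P : Finset (Finset α)} :
    P ∈ setPartitions t ↔ IsSetPartition t P := by
  simp only [setPartitions, mem_filter, mem_powerset]
  constructor
  · rintro ⟨-, hne, hdisj, hsup⟩
    refine ⟨hne, fun s u x hs hu hxs hxu => ?_, hsup⟩
    by_contra h
    simpa [hdisj s hs u hu h] using mem_inter.2 ⟨hxs, hxu⟩
  · exact fun hP => ⟨fun s hs => mem_powerset.2 (hP.subset_of_mem hs), hP.nonempty_of_mem,
      fun s hs u hu h => disjoint_iff_inter_eq_empty.1 (hP.pairwiseDisjoint hs hu h), hP.sup_eq⟩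

theorem setPartitions_empty : setPartitions (∅ : Finset α) = {∅} := by
  ext P
  rw [mem_setPartitions, mem_singleton]
  refine ⟨fun hP => eq_empty_of_forall_notMem fun s hs => ?_,
    by rintro rfl; exact ⟨by simp, by simp, rfl⟩⟩
  obtain ⟨x, hx⟩ := hP.nonempty_of_mem hs
  simpa using hP.subset_of_mem hs hx

theorem sum_setPartitions_eq_sum_powerset {M : Type*} [AddCommMonoid M] {t : Finset α} {x : α}
    (hx : x ∈ t) (F : Finset (Finset α) → M) :
    ∑ P ∈ setPartitions t, F P =
      ∑ c ∈ (t.erase x).powerset, ∑ P ∈ setPartitions c, F (insert (t \ c) P) := by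
  rw [sum_sigma']
  have left_inv : ∀ P ∈ setPartitions t,
      insert (t \ (P.filter (x ∉ ·)).sup id) (P.filter (x ∉ ·)) = P :=
    fun P hP => (mem_setPartitions.1 hP).insert_sdiff_sup_filter hx
  refine sum_nbij' (fun P => ⟨(P.filter (x ∉ ·)).sup id, P.filter (x ∉ ·)⟩)
    (fun p => insert (t \ p.1) p.2) (fun P hP => ?_) (fun p hp => ?_) left_inv (fun p hp => ?_)
    (fun P hP => by rw [left_inv P hP])
  · have hP := mem_setPartitions.1 hP
    refine mem_sigma.2 ⟨mem_powerset.2 (Finset.sup_le fun s hs => ?_),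
      mem_setPartitions.2 (hP.of_subset (filter_subset _ _))⟩
    obtain ⟨hs, hxs⟩ := mem_filter.1 hs
    exact fun y hy => mem_erase.2 ⟨fun h => hxs (h ▸ hy), hP.subset_of_mem hs hy⟩
  · obtain ⟨hc, hp⟩ := mem_sigma.1 hp
    have hct : p.1 ⊆ t := (mem_powerset.1 hc).trans (erase_subset x t)
    have hxc : x ∉ p.1 := fun h => by simpa using mem_powerset.1 hc h
    have := (mem_setPartitions.1 hp).insert ⟨x, mem_sdiff.2 ⟨hx, hxc⟩⟩ sdiff_disjoint
    rwa [sdiff_union_of_subset hct, ← mem_setPartitions] at this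
  · obtain ⟨hc, hp⟩ := mem_sigma.1 hp
    have hp := mem_setPartitions.1 hp
    have hxc : x ∈ t \ p.1 := mem_sdiff.2 ⟨hx, fun h => by simpa using mem_powerset.1 hc h⟩
    have hfilter : (insert (t \ p.1) p.2).filter (x ∉ ·) = p.2 := by
      rw [filter_insert, if_neg (not_not.2 hxc), filter_true_of_mem]
      exact fun s hs hxs => (mem_sdiff.1 hxc).2 (hp.subset_of_mem hs hxs)
    rw [hfilter, hp.sup_eq]

/-- `μ(0̂, 1̂)` in the lattice of partitions of a `k`-element set. -/
def partitionMobius (k : ℕ) : ℤ := (-1) ^ (k - 1) * (k - 1).factorial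

theorem partitionMobius_succ_succ (k : ℕ) :
    partitionMobius (k + 2) = -((k + 1) * partitionMobius (k + 1)) := by
  change (-1) ^ (k + 1) * ((k + 1).factorial : ℤ) = -((k + 1) * ((-1) ^ k * (k.factorial : ℤ)))
  rw [Nat.factorial_succ]
  push_cast
  ring

theorem sum_prod_partitionMobius (t : Finset α) :
    ∑ P ∈ setPartitions t, ∏ s ∈ P, partitionMobius #s = if #t ≤ 1 then 1 else 0 := by
  induction h : #t using Nat.strong_induction_on generalizing t with
  | _ n ih =>
    rcases t.eq_empty_or_nonempty with rfl | ⟨x, hx⟩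
    · simp [setPartitions_empty, ← h]
    have hblock : ∀ c ∈ (t.erase x).powerset,
        ∑ P ∈ setPartitions c, ∏ s ∈ insert (t \ c) P, partitionMobius #s =
          partitionMobius (n - #c) * if #c ≤ 1 then 1 else 0 := by
      intro c hc
      have hct : c ⊆ t := (mem_powerset.1 hc).trans (erase_subset x t)
      have hxc : x ∉ c := fun hxc => by simpa using mem_powerset.1 hc hxc
      have hlt : #c < n := h ▸ card_lt_card ((ssubset_iff_of_subset hct).2 ⟨x, hx, hxc⟩)
      rw [← h, ← card_sdiff_of_subset hct, ← ih #c hlt c rfl, mul_sum]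
      refine sum_congr rfl fun P hP => prod_insert fun hmem => hxc ?_
      exact (mem_setPartitions.1 hP).subset_of_mem hmem (mem_sdiff.2 ⟨hx, hxc⟩)
    rw [sum_setPartitions_eq_sum_powerset hx, sum_congr rfl hblock,
      sum_powerset_apply_card (fun m => partitionMobius (n - m) * if m ≤ 1 then 1 else 0),
      card_erase_of_mem hx, h]
    -- only the `c` with `#c ≤ 1` contribute, and `μ(k + 2) + (k + 1) μ(k + 1) = 0`
    obtain ⟨k, rfl⟩ : ∃ k, n = k + 1 := ⟨n - 1, by have := card_pos.2 ⟨x, hx⟩; omega⟩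
    rcases k with _ | k
    · simp [partitionMobius]
    · rw [Nat.add_sub_cancel, sum_range_succ', sum_range_succ', sum_eq_zero fun m _ => by simp]
      simp [partitionMobius_succ_succ]

def Refines (Q R : Finset (Finset α)) : Prop := ∀ s ∈ Q, ∃ u ∈ R, s ⊆ u

instance (Q R : Finset (Finset α)) : Decidable (Refines Q R) :=
  inferInstanceAs (Decidable (∀ s ∈ Q, ∃ u ∈ R, s ⊆ u))

theorem Refines.biUnion_filter_subset {Q R : Finset (Finset α)} (hQR : Refines Q R) :
    R.biUnion (fun u => Q.filter (· ⊆ u)) = Q := by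
  ext s
  simp only [mem_biUnion, mem_filter]
  exact ⟨fun ⟨_, _, hs, _⟩ => hs, fun hs => let ⟨u, hu, hsu⟩ := hQR s hs; ⟨u, hu, hs, hsu⟩⟩

theorem sum_sum_refines_comm {M : Type*} [AddCommMonoid M] (t : Finset α)
    (F : Finset (Finset α) → Finset (Finset α) → M) :
    ∑ R ∈ setPartitions t, ∑ Q ∈ (setPartitions t).filter (Refines · R), F Q R =
      ∑ Q ∈ setPartitions t, ∑ R ∈ (setPartitions t).filter (Refines Q), F Q R := by
  simp only [sum_filter]
  exact sum_comm

namespace IsSetPartition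

variable {t : Finset α} {Q R : Finset (Finset α)}

theorem restrict (hQ : IsSetPartition t Q) (hR : IsSetPartition t R) (hQR : Refines Q R)
    {u : Finset α} (hu : u ∈ R) : IsSetPartition u (Q.filter (· ⊆ u)) := by
  convert hQ.of_subset (filter_subset _ Q)
  refine (le_antisymm (Finset.sup_le fun s hs => (mem_filter.1 hs).2) fun x hxu => ?_).symm
  obtain ⟨s, hs, hxs⟩ := hQ.exists_mem (hR.subset_of_mem hu hxu)
  obtain ⟨v, hv, hsv⟩ := hQR s hs
  have hsu : s ⊆ u := hR.eq_of_mem_of_mem hv hu (hsv hxs) hxu ▸ hsv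
  exact mem_sup.2 ⟨s, mem_filter.2 ⟨hs, hsu⟩, hxs⟩

theorem injOn_filter_subset (hQ : IsSetPartition t Q) (hR : IsSetPartition t R)
    (hQR : Refines Q R) : Set.InjOn (fun u => Q.filter (· ⊆ u)) R := by
  intro u hu v hv huv
  rw [← (hQ.restrict hR hQR hu).sup_eq, ← (hQ.restrict hR hQR hv).sup_eq]
  exact congrArg (·.sup id) huv

theorem prod_prod_filter_subset {M : Type*} [CommMonoid M] (hQ : IsSetPartition t Q)
    (hR : IsSetPartition t R) (hQR : Refines Q R) (h : Finset α → M) :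
    ∏ u ∈ R, ∏ s ∈ Q.filter (· ⊆ u), h s = ∏ s ∈ Q, h s := by
  rw [← prod_biUnion, hQR.biUnion_filter_subset]
  refine fun u hu v hv huv => disjoint_left.2 fun s hsu hsv => huv ?_
  obtain ⟨x, hx⟩ := hQ.nonempty_of_mem (mem_filter.1 hsu).1
  exact hR.eq_of_mem_of_mem hu hv ((mem_filter.1 hsu).2 hx) ((mem_filter.1 hsv).2 hx)

protected theorem biUnion (hR : IsSetPartition t R) {q : ∀ u ∈ R, Finset (Finset α)}
    (hq : ∀ u hu, IsSetPartition u (q u hu)) :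
    IsSetPartition t (R.attach.biUnion fun u => q u.1 u.2) where
  nonempty_of_mem s hs := by
    obtain ⟨u, -, hs⟩ := mem_biUnion.1 hs
    exact (hq _ _).nonempty_of_mem hs
  eq_of_mem_of_mem s s' x hs hs' hx hx' := by
    obtain ⟨⟨u, hu⟩, -, hs⟩ := mem_biUnion.1 hs
    obtain ⟨⟨v, hv⟩, -, hs'⟩ := mem_biUnion.1 hs'
    obtain rfl := hR.eq_of_mem_of_mem hu hv ((hq u hu).subset_of_mem hs hx)
      ((hq v hv).subset_of_mem hs' hx')
    exact (hq u hu).eq_of_mem_of_mem hs hs' hx hx'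
  sup_eq := by
    rw [sup_biUnion, ← hR.sup_eq, ← sup_attach R id]
    exact sup_congr rfl fun (u : {u // u ∈ R}) _ => (hq u.1 u.2).sup_eq

theorem filter_subset_biUnion (hR : IsSetPartition t R) {q : ∀ u ∈ R, Finset (Finset α)}
    (hq : ∀ u hu, IsSetPartition u (q u hu)) {u : Finset α} (hu : u ∈ R) :
    (R.attach.biUnion fun v => q v.1 v.2).filter (· ⊆ u) = q u hu := by
  ext s
  simp only [mem_filter, mem_biUnion, mem_attach, true_and, Subtype.exists]
  refine ⟨fun ⟨⟨v, hv, hs⟩, hsu⟩ => ?_, fun hs => ⟨⟨u, hu, hs⟩, (hq u hu).subset_of_mem hs⟩⟩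
  obtain ⟨x, hx⟩ := (hq v hv).nonempty_of_mem hs
  obtain rfl := hR.eq_of_mem_of_mem hv hu ((hq v hv).subset_of_mem hs hx) (hsu hx)
  exact hs

theorem prod_sum_setPartitions {M : Type*} [CommSemiring M] (hR : IsSetPartition t R)
    (G : Finset α → Finset (Finset α) → M) :
    ∏ u ∈ R, ∑ Q ∈ setPartitions u, G u Q =
      ∑ Q ∈ (setPartitions t).filter (Refines · R), ∏ u ∈ R, G u (Q.filter (· ⊆ u)) := by
  rw [prod_sum]
  have hpi : ∀ q ∈ R.pi setPartitions, ∀ u hu, IsSetPartition u (q u hu) :=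
    fun q hq u hu => mem_setPartitions.1 (mem_pi.1 hq u hu)
  refine sum_nbij' (fun q => R.attach.biUnion fun u : {u // u ∈ R} => q u.1 u.2)
    (fun Q u _ => Q.filter (· ⊆ u))
    (fun q hq => ?_) (fun Q hQ => ?_) (fun q hq => ?_) (fun Q hQ => ?_) (fun q hq => ?_)
  · refine mem_filter.2 ⟨mem_setPartitions.2 (hR.biUnion (hpi q hq)), fun s hs => ?_⟩
    obtain ⟨⟨u, hu⟩, -, hs⟩ := mem_biUnion.1 hs
    exact ⟨u, hu, (hpi q hq u hu).subset_of_mem hs⟩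
  · obtain ⟨hQ, hQR⟩ := mem_filter.1 hQ
    exact mem_pi.2 fun u hu => mem_setPartitions.2 ((mem_setPartitions.1 hQ).restrict hR hQR hu)
  · funext u hu
    exact hR.filter_subset_biUnion (hpi q hq) hu
  · exact attach_biUnion.trans (mem_filter.1 hQ).2.biUnion_filter_subset
  · rw [← prod_attach R]
    exact prod_congr rfl fun u _ => by rw [hR.filter_subset_biUnion (hpi q hq) u.2]

variable {P : Finset (Finset (Finset α))}

theorem image_sup (hQ : IsSetPartition t Q) (hP : IsSetPartition Q P) :
    IsSetPartition t (P.image (·.sup id)) where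
  nonempty_of_mem s hs := by
    obtain ⟨B, hB, rfl⟩ := mem_image.1 hs
    obtain ⟨s, hs⟩ := hP.nonempty_of_mem hB
    exact (hQ.nonempty_of_mem (hP.subset_of_mem hB hs)).mono (le_sup (f := id) hs)
  eq_of_mem_of_mem s s' x hs hs' hx hx' := by
    obtain ⟨B, hB, rfl⟩ := mem_image.1 hs
    obtain ⟨B', hB', rfl⟩ := mem_image.1 hs'
    obtain ⟨v, hv, hxv⟩ := mem_sup.1 hx
    obtain ⟨v', hv', hxv'⟩ := mem_sup.1 hx'
    obtain rfl := hQ.eq_of_mem_of_mem (hP.subset_of_mem hB hv) (hP.subset_of_mem hB' hv') hxv hxv'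
    rw [hP.eq_of_mem_of_mem hB hB' hv hv']
  sup_eq := by
    rw [sup_image, ← hQ.sup_eq, ← hP.sup_eq, sup_eq_biUnion P id, sup_biUnion]
    rfl

theorem refines_image_sup (hP : IsSetPartition Q P) : Refines Q (P.image (·.sup id)) :=
  fun _ hs =>
    let ⟨B, hB, hsB⟩ := hP.exists_mem hs
    ⟨B.sup id, mem_image_of_mem _ hB, le_sup (f := id) hsB⟩

theorem filter_subset_sup (hQ : IsSetPartition t Q) (hP : IsSetPartition Q P)
    {B : Finset (Finset α)} (hB : B ∈ P) : Q.filter (· ⊆ B.sup id) = B := by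
  ext s
  rw [mem_filter]
  refine ⟨fun ⟨hs, hsB⟩ => ?_, fun hs => ⟨hP.subset_of_mem hB hs, le_sup (f := id) hs⟩⟩
  obtain ⟨x, hx⟩ := hQ.nonempty_of_mem hs
  obtain ⟨v, hv, hxv⟩ := mem_sup.1 (hsB hx)
  obtain rfl := hQ.eq_of_mem_of_mem hs (hP.subset_of_mem hB hv) hx hxv
  exact hv

theorem image_filter_subset (hQ : IsSetPartition t Q) (hR : IsSetPartition t R)
    (hQR : Refines Q R) : IsSetPartition Q (R.image fun u => Q.filter (· ⊆ u)) where
  nonempty_of_mem B hB := by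
    obtain ⟨u, hu, rfl⟩ := mem_image.1 hB
    obtain ⟨x, hx⟩ := hR.nonempty_of_mem hu
    obtain ⟨s, hs, -⟩ := (hQ.restrict hR hQR hu).exists_mem hx
    exact ⟨s, hs⟩
  eq_of_mem_of_mem B B' _ hB hB' hs hs' := by
    obtain ⟨u, hu, rfl⟩ := mem_image.1 hB
    obtain ⟨u', hu', rfl⟩ := mem_image.1 hB'
    obtain ⟨x, hx⟩ := hQ.nonempty_of_mem (mem_filter.1 hs).1
    rw [hR.eq_of_mem_of_mem hu hu' ((mem_filter.1 hs).2 hx) ((mem_filter.1 hs').2 hx)]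
  sup_eq := by
    rw [sup_image, Function.id_comp, sup_eq_biUnion, hQR.biUnion_filter_subset]

theorem sum_setPartitions_eq_sum_refines {M : Type*} [AddCommMonoid M] (hQ : IsSetPartition t Q)
    (H : Finset (Finset (Finset α)) → M) :
    ∑ P ∈ setPartitions Q, H P =
      ∑ R ∈ (setPartitions t).filter (Refines Q), H (R.image fun u => Q.filter (· ⊆ u)) := by
  have left_inv :
      ∀ P ∈ setPartitions Q, (P.image (·.sup id)).image (fun u => Q.filter (· ⊆ u)) = P := by
    intro P hP
    rw [image_image]
    exact (image_congr fun B hB => hQ.filter_subset_sup (mem_setPartitions.1 hP) hB).trans image_id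
  refine sum_nbij' (fun P => P.image (·.sup id)) (fun R => R.image fun u => Q.filter (· ⊆ u))
    (fun P hP => ?_) (fun R hR => ?_) left_inv (fun R hR => ?_) (fun P hP => by rw [left_inv P hP])
  · have hP := mem_setPartitions.1 hP
    exact mem_filter.2 ⟨mem_setPartitions.2 (hQ.image_sup hP), hP.refines_image_sup⟩
  · obtain ⟨hR, hQR⟩ := mem_filter.1 hR
    exact mem_setPartitions.2 (hQ.image_filter_subset (mem_setPartitions.1 hR) hQR)
  · obtain ⟨hR, hQR⟩ := mem_filter.1 hR
    rw [image_image]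
    exact (image_congr fun u hu => (hQ.restrict (mem_setPartitions.1 hR) hQR hu).sup_eq).trans
      image_id

theorem sum_refines_prod_partitionMobius (hQ : IsSetPartition t Q) :
    ∑ R ∈ (setPartitions t).filter (Refines Q), ∏ u ∈ R, partitionMobius #(Q.filter (· ⊆ u)) =
      if #Q ≤ 1 then 1 else 0 := by
  rw [← sum_prod_partitionMobius Q, hQ.sum_setPartitions_eq_sum_refines]
  refine sum_congr rfl fun R hR => ?_
  obtain ⟨hR, hQR⟩ := mem_filter.1 hR
  rw [prod_image (hQ.injOn_filter_subset (mem_setPartitions.1 hR) hQR)]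

end IsSetPartition

section Cumulant

variable {A B C : Type*} [CommMonoid A] [CommRing B] [CommRing C]

def cumulant (f : A → B) (a : α → A) (t : Finset α) : B :=
  ∑ P ∈ setPartitions t, partitionMobius #P • ∏ s ∈ P, f (∏ i ∈ s, a i)

theorem IsSetPartition.cumulant_eq_sum_refines {t : Finset α} {Q : Finset (Finset α)}
    (hQ : IsSetPartition t Q) (g : B → C) (b : Finset α → B) :
    cumulant g b Q = ∑ R ∈ (setPartitions t).filter (Refines Q),
      partitionMobius #R • ∏ u ∈ R, g (∏ s ∈ Q.filter (· ⊆ u), b s) := by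
  rw [cumulant, hQ.sum_setPartitions_eq_sum_refines]
  refine sum_congr rfl fun R hR => ?_
  obtain ⟨hR, hQR⟩ := mem_filter.1 hR
  have hinj := hQ.injOn_filter_subset (mem_setPartitions.1 hR) hQR
  rw [card_image_of_injOn hinj, prod_image hinj]

theorem sum_prod_cumulant (f : A → B) (a : α → A) {t : Finset α} (ht : t.Nonempty) :
    ∑ R ∈ setPartitions t, ∏ u ∈ R, cumulant f a u = f (∏ i ∈ t, a i) := by
  calc ∑ R ∈ setPartitions t, ∏ u ∈ R, cumulant f a u
      = ∑ R ∈ setPartitions t, ∑ Q ∈ (setPartitions t).filter (Refines · R),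
          (∏ u ∈ R, partitionMobius #(Q.filter (· ⊆ u))) • ∏ s ∈ Q, f (∏ i ∈ s, a i) := by
        refine sum_congr rfl fun R hR => ?_
        have hR := mem_setPartitions.1 hR
        simp only [cumulant]
        rw [hR.prod_sum_setPartitions]
        refine sum_congr rfl fun Q hQ => ?_
        obtain ⟨hQ, hQR⟩ := mem_filter.1 hQ
        rw [prod_smul, (mem_setPartitions.1 hQ).prod_prod_filter_subset hR hQR]
    _ = ∑ Q ∈ setPartitions t, (∑ R ∈ (setPartitions t).filter (Refines Q),
          ∏ u ∈ R, partitionMobius #(Q.filter (· ⊆ u))) • ∏ s ∈ Q, f (∏ i ∈ s, a i) := by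
        rw [sum_sum_refines_comm]
        simp only [sum_smul]
    _ = ∑ Q ∈ setPartitions t, if Q = {t} then ∏ s ∈ Q, f (∏ i ∈ s, a i) else 0 := by
        refine sum_congr rfl fun Q hQ => ?_
        have hQ := mem_setPartitions.1 hQ
        rw [hQ.sum_refines_prod_partitionMobius, ite_smul, one_smul, zero_smul]
        exact if_congr (hQ.card_le_one_iff ht) rfl rfl
    _ = f (∏ i ∈ t, a i) := by
        rw [sum_ite_eq', if_pos (mem_setPartitions.2 (isSetPartition_singleton ht)),
          prod_singleton]

theorem cumulant_comp_eq_sum {F : Type*} [FunLike F B C] [AddMonoidHomClass F B C]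
    (f : A → B) (g : F) (a : α → A) (t : Finset α) :
    cumulant (g ∘ f) a t = ∑ P ∈ setPartitions t, cumulant g (cumulant f a) P := by
  symm
  calc ∑ P ∈ setPartitions t, cumulant g (cumulant f a) P
      = ∑ P ∈ setPartitions t, ∑ R ∈ (setPartitions t).filter (Refines P),
          partitionMobius #R • ∏ u ∈ R, g (∏ s ∈ P.filter (· ⊆ u), cumulant f a s) :=
        sum_congr rfl fun P hP => (mem_setPartitions.1 hP).cumulant_eq_sum_refines g _
    _ = ∑ R ∈ setPartitions t, partitionMobius #R • ∑ P ∈ (setPartitions t).filter (Refines · R),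
          ∏ u ∈ R, g (∏ s ∈ P.filter (· ⊆ u), cumulant f a s) := by
        rw [← sum_sum_refines_comm]
        simp only [smul_sum]
    _ = ∑ R ∈ setPartitions t, partitionMobius #R • ∏ u ∈ R, g (f (∏ i ∈ u, a i)) := by
        refine sum_congr rfl fun R hR => ?_
        have hR := mem_setPartitions.1 hR
        rw [← hR.prod_sum_setPartitions fun _ P => g (∏ s ∈ P, cumulant f a s)]
        refine congrArg _ (prod_congr rfl fun u hu => ?_)
        rw [← map_sum, sum_prod_cumulant f a (hR.nonempty_of_mem hu)]
    _ = cumulant (g ∘ f) a t := rfl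

end Cumulant

section Reindexing

variable {β : Type*} [DecidableEq β]

theorem sup_map_mapEmbedding (e : β ↪ α) (P : Finset (Finset β)) :
    (P.map (mapEmbedding e).toEmbedding).sup id = (P.sup id).map e := by
  rw [sup_map, apply_sup_eq_sup_comp (map e) (fun _ _ => map_union _ _) (map_empty e)]
  rfl

theorem isSetPartition_map_iff {e : β ↪ α} {t : Finset β} {P : Finset (Finset β)} :
    IsSetPartition (t.map e) (P.map (mapEmbedding e).toEmbedding) ↔ IsSetPartition t P := by
  refine ⟨fun h => ⟨fun s hs => ?_, fun s u x hs hu hx hx' => ?_, ?_⟩, fun h => ⟨?_, ?_, ?_⟩⟩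
  · exact map_nonempty.1 (h.nonempty_of_mem (mem_map_of_mem _ hs))
  · exact map_injective e (h.eq_of_mem_of_mem (mem_map_of_mem _ hs) (mem_map_of_mem _ hu)
      (mem_map_of_mem e hx) (mem_map_of_mem e hx'))
  · exact map_injective e (by rw [← sup_map_mapEmbedding, h.sup_eq])
  · intro s' hs'
    obtain ⟨s, hs, rfl⟩ := mem_map.1 hs'
    exact map_nonempty.2 (h.nonempty_of_mem hs)
  · intro s' u' y hs' hu' hy hy'
    obtain ⟨s, hs, rfl⟩ := mem_map.1 hs'
    obtain ⟨u, hu, rfl⟩ := mem_map.1 hu'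
    simp only [RelEmbedding.coe_toEmbedding, mapEmbedding_apply] at hy hy' ⊢
    obtain ⟨x, hx, rfl⟩ := mem_map.1 hy
    rw [h.eq_of_mem_of_mem hs hu hx ((mem_map' e).1 hy')]
  · rw [sup_map_mapEmbedding, h.sup_eq]

theorem setPartitions_map (e : β ↪ α) (t : Finset β) :
    setPartitions (t.map e) =
      (setPartitions t).map (mapEmbedding (mapEmbedding e).toEmbedding).toEmbedding := by
  ext P'
  simp only [mem_map, mem_setPartitions, RelEmbedding.coe_toEmbedding, mapEmbedding_apply]
  refine ⟨fun hP' => ?_, by rintro ⟨P, hP, rfl⟩; exact isSetPartition_map_iff.2 hP⟩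
  obtain ⟨P, -, rfl⟩ : ∃ P ⊆ t.powerset, P' = P.map (mapEmbedding e).toEmbedding := by
    refine subset_map_iff.1 fun s hs => ?_
    obtain ⟨u, hu, rfl⟩ := subset_map_iff.1 (hP'.subset_of_mem hs)
    exact mem_map_of_mem _ (mem_powerset.2 hu)
  exact ⟨P, isSetPartition_map_iff.1 hP', rfl⟩

variable {A B : Type*} [CommMonoid A] [CommRing B]

theorem cumulant_map (f : A → B) (a : α → A) (e : β ↪ α) (t : Finset β) :
    cumulant f a (t.map e) = cumulant f (a ∘ e) t := by
  simp [cumulant, setPartitions_map, prod_map]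

end Reindexing

theorem partitionsOf_eq_setPartitions (n : ℕ) : partitionsOf n = setPartitions univ := by
  unfold partitionsOf setPartitions
  -- not `rfl`: over `Fin n` the filter predicate is decided by other instances
  congr 1

theorem cumul_eq_cumulant {A B : Type*} [CommRing A] [CommRing B] (f : A → B) (n : ℕ)
    (a : Fin n → A) : cumul f n a = cumulant f a univ := by
  rw [cumul, cumulant, partitionsOf_eq_setPartitions]
  rfl

theorem cumul_restr {A B : Type*} [CommRing A] [CommRing B] (f : A → B) (a : α → A)
    (s : Finset α) : cumul f #s (restr a s) = cumulant f a s := by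
  have hs :
      univ.map (s.equivFin.symm.toEmbedding.trans (Function.Embedding.subtype (· ∈ s))) = s := by
    rw [← map_map, map_univ_equiv, univ_eq_attach, attach_map_val]
  rw [cumul_eq_cumulant]
  conv_rhs => rw [← hs, cumulant_map]
  rfl

end

theorem cumulant_comp_general (K A B C : Type*) [Field K]
    [CommRing A] [Algebra K A] [CommRing B] [Algebra K B] [CommRing C] [Algebra K C]
    (f : A →ₗ[K] B) (g : B →ₗ[K] C) :
    ∀ (n : ℕ), 1 ≤ n → ∀ a : Fin n → A,
      cumul (⇑g ∘ ⇑f) n a =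
        ∑ P ∈ partitionsOf n,
          cumul (⇑g) P.card fun j =>
            cumul (⇑f) ((P.equivFin.symm j).1.card) (restr a (P.equivFin.symm j).1) := by
  intro n _ a
  rw [cumul_eq_cumulant, cumulant_comp_eq_sum, partitionsOf_eq_setPartitions]
  refine sum_congr rfl fun P _ => ?_
  rw [← cumul_restr]
  exact congrArg _ (funext fun j => (cumul_restr f a _).symm)

/-- cumulants of a composite:
`κ(g∘f)_n(a_1,…,a_n) = Σ_{partitions {I_1,…,I_k}} κ(g)_k(κ(f)_{|I_1|}(…),…,κ(f)_{|I_k|}(…))`. -/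
theorem cumulant_comp (K A B C : Type*) [Field K] [CharZero K]
    [CommRing A] [Algebra K A] [CommRing B] [Algebra K B] [CommRing C] [Algebra K C]
    (f : A →ₗ[K] B) (g : B →ₗ[K] C) (hf : f 1 = 1) (hg : g 1 = 1) :
    ∀ (n : ℕ), 1 ≤ n → ∀ a : Fin n → A,
      cumul (⇑g ∘ ⇑f) n a =
        ∑ P ∈ partitionsOf n,
          cumul (⇑g) P.card fun j =>
            cumul (⇑f) ((P.equivFin.symm j).1.card) (restr a (P.equivFin.symm j).1) :=
  cumulant_comp_general K A B C f g
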